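/- arXiv:2207.08085 — 5 statements merged into one kernel-verified Lean document; each statement's English description precedes it below -/
import Mathlib

section
/- If X is a topological Markov shift with countable state space S and φ: X → ℝ is summable (i.e., the sum over s ∈ S with [s] ≠ ∅ of exp(sup_{ω ∈ [s]} φ(ω)) is finite), then the topological pressure P(φ) = lim_{n→∞} (1/n) log Σ_{w ∈ Sⁿ, [w] ≠ ∅} exp(sup_{ω ∈ [w]} S_n φ(ω)) exists in [-∞, +∞). -/
open Filter MeasureTheory Topology
open scoped ENNReal NNReal BigOperators

namespace TMS

variable {S : Type*}

/-- prepend a symbol to a one-sided sequence -/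
def cons (a : S) (ω : ℕ → S) : ℕ → S
  | 0 => a
  | n + 1 => ω n

/-- the shift transformation -/
def shift (ω : ℕ → S) : ℕ → S := fun n => ω (n + 1)

/-- the (one-sided) topological Markov shift with transition matrix `A` -/
def markovShift (A : S → S → Prop) : Set (ℕ → S) := {ω | ∀ n, A (ω n) (ω (n + 1))}

/-- the cylinder set of a word of length `n`, inside `X` -/
def cylW (X : Set (ℕ → S)) (n : ℕ) (w : Fin n → S) : Set (ℕ → S) :=
  {ω | ω ∈ X ∧ ∀ i : Fin n, ω i = w i}

/-- the cylinder set of a single symbol, inside `X` -/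
def cyl1 (X : Set (ℕ → S)) (s : S) : Set (ℕ → S) := {ω | ω ∈ X ∧ ω 0 = s}

/-- Birkhoff sum `S_n φ` -/
noncomputable def birkhoff (φ : (ℕ → S) → ℝ) (n : ℕ) (ω : ℕ → S) : ℝ :=
  ∑ i ∈ Finset.range n, φ (shift^[i] ω)

open Classical in
/-- the metric `d_θ` -/
noncomputable def dtheta (θ : ℝ) (ω υ : ℕ → S) : ℝ :=
  if ω = υ then 0 else θ ^ sInf {n | ω n ≠ υ n}

/-- supremum norm over `X` -/
noncomputable def supNorm (X : Set (ℕ → S)) (f : (ℕ → S) → ℝ) : ℝ :=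
  sSup ((fun ω => |f ω|) '' X)

/-- `C` is a bound witnessing `[f]_k ≤ C`, i.e. `var_n f ≤ C θ^n` for all `n ≥ k`. -/
def LipBound (X : Set (ℕ → S)) (θ : ℝ) (k : ℕ) (f : (ℕ → S) → ℝ) (C : ℝ) : Prop :=
  ∀ n, k ≤ n → ∀ ω, ω ∈ X → ∀ υ, υ ∈ X → (∀ i, i < n → ω i = υ i) →
    |f ω - f υ| ≤ C * θ ^ n

/-- the seminorm `[f]_k` -/
noncomputable def lipSemi (X : Set (ℕ → S)) (θ : ℝ) (k : ℕ) (f : (ℕ → S) → ℝ) : ℝ :=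
  sInf {C | 0 ≤ C ∧ LipBound X θ k f C}

/-- the norm `‖f‖_k = ‖f‖_∞ + [f]_k` -/
noncomputable def normK (X : Set (ℕ → S)) (θ : ℝ) (k : ℕ) (f : (ℕ → S) → ℝ) : ℝ :=
  supNorm X f + lipSemi X θ k f

/-- `φ` is summable: `Σ_{s : [s] ≠ ∅} exp (sup_{[s]} φ) < ∞` -/
def SummableOn (X : Set (ℕ → S)) (φ : (ℕ → S) → ℝ) : Prop :=
  (∀ s : S, BddAbove (φ '' cyl1 X s)) ∧
    Summable (fun s : {s : S // (cyl1 X s).Nonempty} => Real.exp (sSup (φ '' cyl1 X s.1)))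

/-- finite irreducibility of a transition matrix -/
def FinitelyIrreducible (A : S → S → Prop) : Prop :=
  ∃ F : Finset (List S), ∀ a b : S, ∃ w ∈ F, List.Chain' A (a :: (w ++ [b]))

/-- `X` contains a periodic point of the shift -/
def HasPeriodicPoint (X : Set (ℕ → S)) : Prop :=
  ∃ ω, ω ∈ X ∧ ∃ m, 0 < m ∧ shift^[m] ω = ω

/-- the Ruelle transfer operator `L_M` associated to `M` and the potential `φ` -/
noncomputable def transfer (M : S → S → Prop) (φ : (ℕ → S) → ℝ)
    (f : (ℕ → S) → ℝ) : (ℕ → S) → ℝ :=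
  fun ω => ∑' a : {a : S // M a (ω 0)}, Real.exp (φ (cons a ω)) * f (cons a ω)

section Top

variable [TopologicalSpace S]

/-- the cone `Λ^k_c` -/
def cone (X : Set (ℕ → S)) (θ : ℝ) (k : ℕ) (c : ℝ) : Set ((ℕ → S) → ℝ) :=
  {f | ContinuousOn f X ∧ (∀ ω ∈ X, 0 ≤ f ω) ∧
    ∀ ω ∈ X, ∀ υ ∈ X, (∀ i, i < k → ω i = υ i) →
      f ω ≤ Real.exp (c * dtheta θ ω υ) * f υ}

/-- the space `C_b(X)` of bounded continuous functions -/
def Cb (X : Set (ℕ → S)) : Set ((ℕ → S) → ℝ) :=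
  {f | ContinuousOn f X ∧ BddAbove ((fun ω => |f ω|) '' X)}

/-- the space `F^k_b(X)` of bounded weak-Lipschitz functions -/
def Fkb (X : Set (ℕ → S)) (θ : ℝ) (k : ℕ) : Set ((ℕ → S) → ℝ) :=
  {f | f ∈ Cb X ∧ ∃ C, LipBound X θ k f C}

end Top

/-- operator norm of `L` on the space `F` with norm `N` -/
noncomputable def opNorm (N : ((ℕ → S) → ℝ) → ℝ) (F : Set ((ℕ → S) → ℝ))
    (L : ((ℕ → S) → ℝ) → (ℕ → S) → ℝ) : ℝ :=
  sSup {r | ∃ f ∈ F, N f ≤ 1 ∧ r = N (L f)}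

/-- spectral radius of `L` on `(F, N)` via the Gelfand formula -/
noncomputable def specRad (N : ((ℕ → S) → ℝ) → ℝ) (F : Set ((ℕ → S) → ℝ))
    (L : ((ℕ → S) → ℝ) → (ℕ → S) → ℝ) : ℝ :=
  Filter.limsup (fun n : ℕ => (opNorm N F (L^[n])) ^ ((1 : ℝ) / n)) Filter.atTop

/-- the `n`-th partition function `Σ_{w ∈ Sⁿ, [w] ≠ ∅} exp (sup_{[w]} S_n φ)` -/
noncomputable def partition (X : Set (ℕ → S)) (φ : (ℕ → S) → ℝ) (n : ℕ) : ℝ≥0∞ :=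
  ∑' w : {w : Fin n → S // (cylW X n w).Nonempty},
    ENNReal.ofReal (Real.exp (sSup (birkhoff φ n '' cylW X n w.1)))

/-- `P` is the topological pressure of `φ` on `X` -/
def IsPressure (X : Set (ℕ → S)) (φ : (ℕ → S) → ℝ) (P : ℝ) : Prop :=
  Filter.Tendsto (fun n : ℕ => Real.log (partition X φ n).toReal / (n : ℝ))
    Filter.atTop (nhds P)

/-- there is an `M`-path from `a` to `b` (of length at least one) -/
def reaches (M : S → S → Prop) (a b : S) : Prop :=
  ∃ l : List S, List.Chain M a (l ++ [b])

/-- communication relation `a ↔ b` -/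
def comm (M : S → S → Prop) (a b : S) : Prop :=
  a = b ∨ (reaches M a b ∧ reaches M b a)

/-- the submatrix of `M` indexed by `T` -/
def restrictM (M : S → S → Prop) (T : Set S) : S → S → Prop :=
  fun a b => M a b ∧ a ∈ T ∧ b ∈ T

/-- support of a Borel measure -/
def msupport [TopologicalSpace S] [MeasurableSpace S] (ν : Measure (ℕ → S)) :
    Set (ℕ → S) :=
  {ω | ∀ U : Set (ℕ → S), IsOpen U → ω ∈ U → 0 < ν U}

end TMS

namespace Stmt0Proof
open TMS Filter


lemma subadd_iter (u : ℕ → ℝ) (h : ∀ m n, u (m + n) ≤ u m + u n) (m r : ℕ) :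
    ∀ q : ℕ, u (m * q + r) ≤ q * u m + u r := by
  intro q
  induction q with
  | zero => simp
  | succ q ih =>
      have : m * (q + 1) + r = m + (m * q + r) := by ring
      rw [this]
      calc u (m + (m * q + r)) ≤ u m + u (m * q + r) := h _ _
        _ ≤ u m + (q * u m + u r) := by linarith
        _ = (q + 1 : ℕ) * u m + u r := by push_cast; ring

lemma fekete_key (u : ℕ → ℝ) (h : ∀ m n, u (m + n) ≤ u m + u n) (m : ℕ) (hm : 0 < m) :
    limsup (fun n : ℕ => ((u n / n : ℝ) : EReal)) atTop ≤ ((u m / m : ℝ) : EReal) := by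
  set B : ℝ := ∑ r ∈ Finset.range m, |u r| with hB
  have hBnn : 0 ≤ B := Finset.sum_nonneg fun _ _ => abs_nonneg _
  set C : ℝ := |u m| + B with hC
  have hCnn : 0 ≤ C := add_nonneg (abs_nonneg _) hBnn
  have mpos : (0 : ℝ) < m := by exact_mod_cast hm
  -- key real estimate
  have key : ∀ n : ℕ, 1 ≤ n → u n / n ≤ u m / m + C / n := by
    intro n hn
    have npos : (0 : ℝ) < n := by exact_mod_cast hn
    set q := n / m with hq
    set r := n % m with hr
    have hnmr : m * q + r = n := Nat.div_add_mod n m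
    have hrm : r < m := Nat.mod_lt _ hm
    have h1 : u n ≤ q * u m + B := by
      have := subadd_iter u h m r q
      rw [hnmr] at this
      have hub : u r ≤ B := by
        calc u r ≤ |u r| := le_abs_self _
          _ ≤ B := Finset.single_le_sum (f := fun i => |u i|)
                (fun _ _ => abs_nonneg _) (Finset.mem_range.mpr hrm)
      linarith
    have hqm_le : (q : ℝ) * m ≤ n := by
      have h' : m * q ≤ n := by omega
      have h'' : ((m * q : ℕ) : ℝ) ≤ n := by exact_mod_cast h'
      push_cast at h''; linarith [mul_comm (q : ℝ) (m : ℝ)]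
    have hqm_ge : (n : ℝ) - m ≤ (q : ℝ) * m := by
      have h' : n ≤ m * q + m := by omega
      have h'' : (n : ℝ) ≤ ((m * q : ℕ) : ℝ) + m := by exact_mod_cast h'
      push_cast at h''; linarith [mul_comm (q : ℝ) (m : ℝ)]
    -- multiplied inequality
    have T : u n * m ≤ u m * n + C * m := by
      have h2 : u n * m ≤ (q * u m + B) * m :=
        mul_le_mul_of_nonneg_right h1 mpos.le
      have h3 : (q : ℝ) * u m * m ≤ u m * n + |u m| * m := by
        rcases abs_cases (u m) with ⟨habs, hsgn⟩ | ⟨habs, hsgn⟩ <;> nlinarith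
      nlinarith
    rw [div_add_div _ _ (ne_of_gt mpos) (ne_of_gt npos), div_le_div_iff₀ npos (mul_pos mpos npos)]
    nlinarith [mul_le_mul_of_nonneg_right T npos.le]
  refine le_of_forall_gt_imp_ge_of_dense fun c hc => ?_
  induction c with
  | bot => exact absurd hc (by simp)
  | top => exact le_top
  | coe b =>
      have hab : u m / m < b := by exact_mod_cast hc
      have hεpos : 0 < b - u m / m := by linarith
      set ε := b - u m / m with hε
      have hev : ∀ᶠ n : ℕ in atTop, u n / n ≤ b := by
        obtain ⟨N, hN⟩ := exists_nat_gt (C / ε)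
        filter_upwards [eventually_ge_atTop (max 1 (N + 1))] with n hn
        have hn1 : 1 ≤ n := le_trans (le_max_left _ _) hn
        have hnN : (N : ℝ) + 1 ≤ n := by
          have : N + 1 ≤ n := le_trans (le_max_right _ _) hn
          exact_mod_cast this
        have npos : (0 : ℝ) < n := by positivity
        have hCn : C / n ≤ ε := by
          rw [div_le_iff₀ npos]
          have hCN : C ≤ ε * (N + 1) := by
            have := (div_lt_iff₀ hεpos).mp hN
            nlinarith
          nlinarith
        have := key n hn1
        linarith
      refine limsup_le_of_le (h := ?_)
      filter_upwards [hev] with n hn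
      exact_mod_cast EReal.coe_le_coe_iff.mpr hn

lemma fekete (u : ℕ → ℝ) (h : ∀ m n, u (m + n) ≤ u m + u n) :
    ∃ P : EReal, P ≠ ⊤ ∧
      Tendsto (fun n : ℕ => ((u n / n : ℝ) : EReal)) atTop (nhds P) := by
  set v : ℕ → EReal := fun n => ((u n / n : ℝ) : EReal) with hv
  set P' : EReal := ⨅ m : ℕ, ((u (m + 1) / ((m + 1 : ℕ) : ℝ) : ℝ) : EReal) with hP'
  have hls : limsup v atTop ≤ P' :=
    le_iInf fun m => fekete_key u h (m + 1) (Nat.succ_pos m)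
  have hli : P' ≤ liminf v atTop := by
    have hev : ∀ᶠ n : ℕ in atTop, P' ≤ v n := by
      filter_upwards [eventually_ge_atTop 1] with n hn
      have : P' ≤ ((u ((n - 1) + 1) / ((n - 1) + 1 : ℕ) : ℝ) : EReal) := iInf_le _ (n - 1)
      have hn1 : (n - 1) + 1 = n := by omega
      rwa [hn1] at this
    calc P' = liminf (fun _ : ℕ => P') atTop := (liminf_const _).symm
      _ ≤ liminf v atTop := liminf_le_liminf hev
  have heq : liminf v atTop = limsup v atTop :=
    le_antisymm (liminf_le_limsup) (le_trans hls hli)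
  refine ⟨limsup v atTop, ?_, tendsto_of_liminf_eq_limsup heq rfl⟩
  exact ne_top_of_le_ne_top (EReal.coe_ne_top _) (le_trans hls (iInf_le _ 0))



variable {S : Type*}

lemma shift_mem {A : S → S → Prop} {ω : ℕ → S} (h : ω ∈ markovShift A) :
    shift ω ∈ markovShift A := fun n => h (n + 1)

lemma shift_iter_mem {A : S → S → Prop} {ω : ℕ → S} (h : ω ∈ markovShift A) (m : ℕ) :
    shift^[m] ω ∈ markovShift A := by
  induction m with
  | zero => exact h
  | succ m ih => rw [Function.iterate_succ_apply']; exact shift_mem ih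

lemma shift_iter_apply (ω : ℕ → S) (m k : ℕ) : (shift^[m] ω) k = ω (k + m) := by
  induction m generalizing ω with
  | zero => rfl
  | succ m ih =>
      rw [Function.iterate_succ_apply, ih]
      show ω (k + m + 1) = ω (k + (m + 1))
      congr 1

lemma birkhoff_fin (φ : (ℕ → S) → ℝ) (n : ℕ) (ω : ℕ → S) :
    birkhoff φ n ω = ∑ i : Fin n, φ (shift^[(i : ℕ)] ω) := by
  rw [birkhoff, ← Fin.sum_univ_eq_sum_range]

section Main

variable {A : S → S → Prop} {φ : (ℕ → S) → ℝ}

/-- pointwise upper bound for Birkhoff sums on a cylinder -/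
lemma birkhoff_le_on_cyl (hb : ∀ s : S, BddAbove (φ '' cyl1 (markovShift A) s))
    {n : ℕ} {w : Fin n → S} {ω : ℕ → S} (hω : ω ∈ cylW (markovShift A) n w) :
    birkhoff φ n ω ≤ ∑ i : Fin n, sSup (φ '' cyl1 (markovShift A) (w i)) := by
  rw [birkhoff_fin]
  apply Finset.sum_le_sum
  intro i _
  apply le_csSup (hb (w i))
  refine ⟨shift^[(i : ℕ)] ω, ⟨shift_iter_mem hω.1 _, ?_⟩, rfl⟩
  rw [shift_iter_apply, Nat.zero_add]
  exact hω.2 i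

lemma bddAbove_birkhoff (hb : ∀ s : S, BddAbove (φ '' cyl1 (markovShift A) s))
    (n : ℕ) (w : Fin n → S) :
    BddAbove (birkhoff φ n '' cylW (markovShift A) n w) := by
  refine ⟨∑ i : Fin n, sSup (φ '' cyl1 (markovShift A) (w i)), ?_⟩
  rintro x ⟨ω, hω, rfl⟩
  exact birkhoff_le_on_cyl hb hω

lemma birkhoff_split (φ : (ℕ → S) → ℝ) (m n : ℕ) (ω : ℕ → S) :
    birkhoff φ (m + n) ω = birkhoff φ m ω + birkhoff φ n (shift^[m] ω) := by
  unfold birkhoff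
  rw [Finset.sum_range_add]
  congr 1
  apply Finset.sum_congr rfl
  intro i _
  congr 1
  rw [← Function.iterate_add_apply, add_comm]

lemma mem_cyl_left {m n : ℕ} {w : Fin (m + n) → S} {ω : ℕ → S}
    (hω : ω ∈ cylW (markovShift A) (m + n) w) :
    ω ∈ cylW (markovShift A) m (fun i => w (Fin.castAdd n i)) := by
  refine ⟨hω.1, fun i => ?_⟩
  have := hω.2 (Fin.castAdd n i)
  simpa using this

lemma mem_cyl_right {m n : ℕ} {w : Fin (m + n) → S} {ω : ℕ → S}
    (hω : ω ∈ cylW (markovShift A) (m + n) w) :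
    shift^[m] ω ∈ cylW (markovShift A) n (fun j => w (Fin.natAdd m j)) := by
  refine ⟨shift_iter_mem hω.1 _, fun j => ?_⟩
  rw [shift_iter_apply]
  have := hω.2 (Fin.natAdd m j)
  simpa [add_comm] using this

lemma partition_submul (hb : ∀ s : S, BddAbove (φ '' cyl1 (markovShift A) s)) (m n : ℕ) :
    partition (markovShift A) φ (m + n) ≤
      partition (markovShift A) φ m * partition (markovShift A) φ n := by
  classical
  set X := markovShift A with hX
  set T : (k : ℕ) → Type _ := fun k => {w : Fin k → S // (cylW X k w).Nonempty} with hT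
  set g : (k : ℕ) → T k → ℝ≥0∞ :=
    fun k w => ENNReal.ofReal (Real.exp (sSup (birkhoff φ k '' cylW X k w.1))) with hg
  have hΨ : ∀ w : T (m + n),
      (cylW X m (fun i => w.1 (Fin.castAdd n i))).Nonempty ∧
      (cylW X n (fun j => w.1 (Fin.natAdd m j))).Nonempty := by
    rintro ⟨w, ω, hω⟩
    exact ⟨⟨ω, mem_cyl_left hω⟩, ⟨shift^[m] ω, mem_cyl_right hω⟩⟩
  set Ψ : T (m + n) → T m × T n := fun w =>
    (⟨fun i => w.1 (Fin.castAdd n i), (hΨ w).1⟩, ⟨fun j => w.1 (Fin.natAdd m j), (hΨ w).2⟩)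
    with hΨdef
  have hinj : Function.Injective Ψ := by
    intro w w' h
    have h1 := congrArg (fun p => (p.1 : Fin m → S)) h
    have h2 := congrArg (fun p => (p.2 : Fin n → S)) h
    simp only [hΨdef] at h1 h2
    apply Subtype.ext
    funext i
    rcases lt_or_ge (i : ℕ) m with hi | hi
    · have hcast : Fin.castAdd n (⟨(i : ℕ), hi⟩ : Fin m) = i := by
        apply Fin.ext; simp
      have := congrFun h1 (⟨(i : ℕ), hi⟩ : Fin m)
      simpa [hcast] using this
    · have hj : (i : ℕ) - m < n := by omega
      have hcast : Fin.natAdd m (⟨(i : ℕ) - m, hj⟩ : Fin n) = i := by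
        apply Fin.ext; simp; omega
      have := congrFun h2 (⟨(i : ℕ) - m, hj⟩ : Fin n)
      simpa [hcast] using this
  have hle : ∀ w : T (m + n), g (m + n) w ≤ g m (Ψ w).1 * g n (Ψ w).2 := by
    intro w
    have hsup : sSup (birkhoff φ (m + n) '' cylW X (m + n) w.1) ≤
        sSup (birkhoff φ m '' cylW X m (Ψ w).1.1) +
        sSup (birkhoff φ n '' cylW X n (Ψ w).2.1) := by
      apply csSup_le (w.2.image _)
      rintro x ⟨ω, hω, rfl⟩
      rw [birkhoff_split]
      gcongr
      · exact le_csSup (bddAbove_birkhoff hb _ _) ⟨ω, mem_cyl_left hω, rfl⟩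
      · exact le_csSup (bddAbove_birkhoff hb _ _) ⟨shift^[m] ω, mem_cyl_right hω, rfl⟩
    calc g (m + n) w
        ≤ ENNReal.ofReal (Real.exp (sSup (birkhoff φ m '' cylW X m (Ψ w).1.1) +
            sSup (birkhoff φ n '' cylW X n (Ψ w).2.1))) := by
          apply ENNReal.ofReal_le_ofReal
          exact Real.exp_le_exp.mpr hsup
      _ = g m (Ψ w).1 * g n (Ψ w).2 := by
          rw [Real.exp_add, ENNReal.ofReal_mul (Real.exp_nonneg _)]
  calc partition X φ (m + n) = ∑' w : T (m + n), g (m + n) w := rfl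
    _ ≤ ∑' w : T (m + n), g m (Ψ w).1 * g n (Ψ w).2 := ENNReal.tsum_le_tsum hle
    _ ≤ ∑' p : T m × T n, g m p.1 * g n p.2 :=
        ENNReal.tsum_comp_le_tsum_of_injective hinj _
    _ = ∑' a : T m, ∑' b : T n, g m a * g n b := ENNReal.tsum_prod'
    _ = (∑' a : T m, g m a) * ∑' b : T n, g n b := by
        simp_rw [ENNReal.tsum_mul_left]
        rw [ENNReal.tsum_mul_right]
    _ = partition X φ m * partition X φ n := rfl

lemma cylW_one (X : Set (ℕ → S)) (w : Fin 1 → S) : cylW X 1 w = cyl1 X (w 0) := by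
  ext ω
  simp [cylW, cyl1, Fin.forall_fin_one]

lemma birkhoff_one (φ : (ℕ → S) → ℝ) : birkhoff φ 1 = φ := by
  funext ω; simp [birkhoff]

lemma partition_one_ne_top (hφ : SummableOn (markovShift A) φ) :
    partition (markovShift A) φ 1 ≠ ⊤ := by
  classical
  set X := markovShift A with hX
  have hcongr : ∀ w : {w : Fin 1 → S // (cylW X 1 w).Nonempty},
      ENNReal.ofReal (Real.exp (sSup (birkhoff φ 1 '' cylW X 1 w.1))) =
      ENNReal.ofReal (Real.exp (sSup (φ '' cyl1 X (w.1 0)))) := by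
    intro w; rw [birkhoff_one, cylW_one]
  have hmap : ∀ w : {w : Fin 1 → S // (cylW X 1 w).Nonempty},
      (cyl1 X (w.1 0)).Nonempty := by
    intro w; rw [← cylW_one]; exact w.2
  set θ : {w : Fin 1 → S // (cylW X 1 w).Nonempty} → {s : S // (cyl1 X s).Nonempty} :=
    fun w => ⟨w.1 0, hmap w⟩ with hθ
  have hinj : Function.Injective θ := by
    intro w w' h
    apply Subtype.ext
    funext i
    have h0 : w.1 0 = w'.1 0 := congrArg Subtype.val h
    rw [Subsingleton.elim i 0]
    exact h0
  have hle : partition X φ 1 ≤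
      ∑' s : {s : S // (cyl1 X s).Nonempty}, ENNReal.ofReal (Real.exp (sSup (φ '' cyl1 X s.1))) := by
    calc partition X φ 1
        = ∑' w : {w : Fin 1 → S // (cylW X 1 w).Nonempty},
            ENNReal.ofReal (Real.exp (sSup (φ '' cyl1 X ((θ w).1)))) := by
          apply tsum_congr; intro w; exact hcongr w
      _ ≤ _ := ENNReal.tsum_comp_le_tsum_of_injective hinj _
  have hfin : (∑' s : {s : S // (cyl1 X s).Nonempty},
      ENNReal.ofReal (Real.exp (sSup (φ '' cyl1 X s.1)))) ≠ ⊤ := by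
    rw [← ENNReal.ofReal_tsum_of_nonneg (fun s => Real.exp_nonneg _) hφ.2]
    exact ENNReal.ofReal_ne_top
  exact ne_top_of_le_ne_top hfin hle

lemma partition_zero_ne_top (hX : (markovShift A).Nonempty) :
    partition (markovShift A) φ 0 ≠ ⊤ := by
  classical
  haveI : Subsingleton (Fin 0 → S) := ⟨fun a b => funext fun i => i.elim0⟩
  set X := markovShift A
  rcases isEmpty_or_nonempty {w : Fin 0 → S // (cylW X 0 w).Nonempty} with he | hne
  · rw [partition, tsum_empty]; exact ENNReal.zero_ne_top
  · obtain ⟨a⟩ := hne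
    rw [partition, tsum_eq_single a (fun b hb => absurd (Subsingleton.elim b a) hb)]
    exact ENNReal.ofReal_ne_top

lemma partition_ne_top (hφ : SummableOn (markovShift A) φ) (hX : (markovShift A).Nonempty)
    (n : ℕ) : partition (markovShift A) φ n ≠ ⊤ := by
  induction n with
  | zero => exact partition_zero_ne_top hX
  | succ n ih =>
      have := partition_submul (A := A) (φ := φ) hφ.1 n 1
      exact ne_top_of_le_ne_top (ENNReal.mul_ne_top ih (partition_one_ne_top hφ)) this

lemma partition_ne_zero (hX : (markovShift A).Nonempty) (n : ℕ) :
    partition (markovShift A) φ n ≠ 0 := by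
  obtain ⟨ω, hω⟩ := hX
  set X := markovShift A
  set w : Fin n → S := fun i => ω i with hw
  have hmem : ω ∈ cylW X n w := ⟨hω, fun i => rfl⟩
  have hpos : 0 < ENNReal.ofReal (Real.exp (sSup (birkhoff φ n '' cylW X n w))) :=
    ENNReal.ofReal_pos.mpr (Real.exp_pos _)
  have hle : ENNReal.ofReal (Real.exp (sSup (birkhoff φ n '' cylW X n w))) ≤
      partition X φ n := ENNReal.le_tsum (⟨w, ⟨ω, hmem⟩⟩ : {w : Fin n → S // (cylW X n w).Nonempty})
  exact (lt_of_lt_of_le hpos hle).ne'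

end Main

end Stmt0Proof


/-- for a summable potential on a countable-state TMS, the topological
pressure limit exists in `[-∞, +∞)`. -/
theorem stmt0 {S : Type*} [Countable S] (A : S → S → Prop) (φ : (ℕ → S) → ℝ)
    (hφ : TMS.SummableOn (TMS.markovShift A) φ) :
    ∃ P : EReal, P ≠ ⊤ ∧
      Filter.Tendsto
        (fun n : ℕ =>
          ((Real.log (TMS.partition (TMS.markovShift A) φ n).toReal / (n : ℝ) : ℝ) : EReal))
        Filter.atTop (nhds P) := by
  classical
  rcases Set.eq_empty_or_nonempty (TMS.markovShift A) with hX | hX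
  · refine ⟨((0 : ℝ) : EReal), EReal.coe_ne_top 0, ?_⟩
    have hZ : ∀ n : ℕ, TMS.partition (TMS.markovShift A) φ n = 0 := by
      intro n
      have : IsEmpty {w : Fin n → S // (TMS.cylW (TMS.markovShift A) n w).Nonempty} := by
        refine ⟨fun w => ?_⟩
        obtain ⟨ω, hω⟩ := w.2
        exact absurd hω.1 (by rw [hX]; exact Set.notMem_empty ω)
      rw [TMS.partition, tsum_empty]
    have : (fun n : ℕ =>
        ((Real.log (TMS.partition (TMS.markovShift A) φ n).toReal / (n : ℝ) : ℝ) : EReal)) =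
        fun _ : ℕ => ((0 : ℝ) : EReal) := by
      funext n
      rw [hZ n]
      simp
    rw [this]
    exact tendsto_const_nhds
  · set u : ℕ → ℝ := fun n => Real.log (TMS.partition (TMS.markovShift A) φ n).toReal with hu
    have hsub : ∀ m n, u (m + n) ≤ u m + u n := by
      intro m n
      have h1 := Stmt0Proof.partition_submul (A := A) (φ := φ) hφ.1 m n
      have hm0 : TMS.partition (TMS.markovShift A) φ m ≠ 0 := Stmt0Proof.partition_ne_zero hX m
      have hn0 : TMS.partition (TMS.markovShift A) φ n ≠ 0 := Stmt0Proof.partition_ne_zero hX n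
      have hmt : TMS.partition (TMS.markovShift A) φ m ≠ ⊤ := Stmt0Proof.partition_ne_top hφ hX m
      have hnt : TMS.partition (TMS.markovShift A) φ n ≠ ⊤ := Stmt0Proof.partition_ne_top hφ hX n
      have hmnt : TMS.partition (TMS.markovShift A) φ (m + n) ≠ ⊤ :=
        Stmt0Proof.partition_ne_top hφ hX (m + n)
      have hmn0 : TMS.partition (TMS.markovShift A) φ (m + n) ≠ 0 :=
        Stmt0Proof.partition_ne_zero hX (m + n)
      have h2 : (TMS.partition (TMS.markovShift A) φ (m + n)).toReal ≤
          (TMS.partition (TMS.markovShift A) φ m).toReal *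
          (TMS.partition (TMS.markovShift A) φ n).toReal := by
        rw [← ENNReal.toReal_mul]
        exact ENNReal.toReal_mono (ENNReal.mul_ne_top hmt hnt) h1
      have hmpos : 0 < (TMS.partition (TMS.markovShift A) φ m).toReal :=
        ENNReal.toReal_pos hm0 hmt
      have hnpos : 0 < (TMS.partition (TMS.markovShift A) φ n).toReal :=
        ENNReal.toReal_pos hn0 hnt
      calc u (m + n) ≤ Real.log ((TMS.partition (TMS.markovShift A) φ m).toReal *
            (TMS.partition (TMS.markovShift A) φ n).toReal) :=
          Real.log_le_log (ENNReal.toReal_pos hmn0 hmnt) h2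
        _ = u m + u n := Real.log_mul hmpos.ne' hnpos.ne'
    exact Stmt0Proof.fekete u hsub
end

section
/- Let φ: X → ℝ satisfy [φ]_{k+1} < ∞ (weak Lipschitz up to level k+1), and let c ≥ θ[φ]_{k+1}/(1-θ). If f ∈ Λ^k_c and the transfer operator image L_M f is continuous, then L_M f ∈ Λ^k_c. -/
open Filter MeasureTheory Topology
open scoped ENNReal NNReal BigOperators

namespace TMS

variable {S : Type*}

section Metric

variable {θ : ℝ} {ω υ : ℕ → S}

lemma dtheta_nonneg (hθ : 0 ≤ θ) (ω υ : ℕ → S) : 0 ≤ dtheta θ ω υ := by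
  unfold dtheta
  split_ifs
  exacts [le_rfl, pow_nonneg hθ _]

lemma exists_dtheta_eq_pow (h : ω ≠ υ) :
    ∃ N, dtheta θ ω υ = θ ^ N ∧ (∀ i < N, ω i = υ i) ∧ ω N ≠ υ N := by
  classical
  have hne : {n | ω n ≠ υ n}.Nonempty := Function.ne_iff.mp h
  refine ⟨sInf {n | ω n ≠ υ n}, by simp only [dtheta, if_neg h], fun i hi => ?_, Nat.sInf_mem hne⟩
  by_contra hi'
  exact (Nat.sInf_le hi').not_gt hi

lemma dtheta_cons_cons (a : S) (ω υ : ℕ → S) :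
    dtheta θ (cons a ω) (cons a υ) = θ * dtheta θ ω υ := by
  classical
  by_cases h : ω = υ
  · simp [dtheta, h]
  have hc : cons a ω ≠ cons a υ := fun hc => h (funext fun n => congrFun hc (n + 1))
  -- The first disagreement of `a ω` and `a υ` comes one step after that of `ω` and `υ`.
  have hfirst : 1 ≤ sInf {n | cons a ω n ≠ cons a υ n} := by
    refine Nat.one_le_iff_ne_zero.mpr fun h0 => ?_
    rcases Nat.sInf_eq_zero.mp h0 with h0 | hempty
    · exact h0 rfl
    · exact Set.Nonempty.ne_empty (Function.ne_iff.mp hc) hempty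
  simp only [dtheta, if_neg h, if_neg hc, ← Nat.sInf_add hfirst, pow_succ']
  rfl

lemma LipBound.abs_sub_le_mul_dtheta {X : Set (ℕ → S)} {m : ℕ} {f : (ℕ → S) → ℝ} {C : ℝ}
    (hf : LipBound X θ m f C) (hω : ω ∈ X) (hυ : υ ∈ X) (hagree : ∀ i < m, ω i = υ i) :
    |f ω - f υ| ≤ C * dtheta θ ω υ := by
  by_cases h : ω = υ
  · simp [h, dtheta]
  obtain ⟨N, hd, hbelow, hN⟩ := exists_dtheta_eq_pow (θ := θ) h
  have hmN : m ≤ N := not_lt.mp fun hlt => hN (hagree N hlt)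
  rw [hd]
  exact hf N hmN ω hω υ hυ hbelow

end Metric

lemma lipBound_lipSemi {X : Set (ℕ → S)} {θ : ℝ} (hθ : 0 < θ) {m : ℕ} {f : (ℕ → S) → ℝ}
    (hf : ∃ C, LipBound X θ m f C) : LipBound X θ m f (lipSemi X θ m f) := by
  obtain ⟨C, hC⟩ := hf
  have hmem : max C 0 ∈ {C | 0 ≤ C ∧ LipBound X θ m f C} :=
    ⟨le_max_right _ _, fun n hn ω hω υ hυ h => (hC n hn ω hω υ hυ h).trans
      (mul_le_mul_of_nonneg_right (le_max_left _ _) (pow_nonneg hθ.le n))⟩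
  intro n hn ω hω υ hυ h
  rw [lipSemi, ← div_le_iff₀ (pow_pos hθ n)]
  refine le_csInf ⟨_, hmem⟩ fun B hB => ?_
  rw [div_le_iff₀ (pow_pos hθ n)]
  exact hB.2 n hn ω hω υ hυ h

lemma cons_mem_markovShift {A : S → S → Prop} {ω : ℕ → S} (hω : ω ∈ markovShift A) {a : S}
    (ha : A a (ω 0)) : cons a ω ∈ markovShift A
  | 0 => ha
  | n + 1 => hω n

/-- The reverse comparison `hhg` rules out the junk value `∑' i, g i = 0 ≠ ∑' i, h i` from
`g` failing to be summable while `h` is. -/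
lemma tsum_le_mul_tsum_of_le_mul {ι : Type*} {g h : ι → ℝ} {K K' : ℝ} (hg : 0 ≤ g)
    (hh : 0 ≤ h) (hgh : ∀ i, g i ≤ K * h i) (hhg : ∀ i, h i ≤ K' * g i) :
    ∑' i, g i ≤ K * ∑' i, h i := by
  by_cases hs : Summable h
  · have hKh : Summable fun i => K * h i := hs.mul_left K
    calc ∑' i, g i ≤ ∑' i, K * h i :=
          (Summable.of_nonneg_of_le hg hgh hKh).tsum_le_tsum hgh hKh
      _ = K * ∑' i, h i := tsum_mul_left
  · have hgs : ¬ Summable g := fun hgs => hs (.of_nonneg_of_le hh hhg (hgs.mul_left K'))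
    rw [tsum_eq_zero_of_not_summable hgs, tsum_eq_zero_of_not_summable hs, mul_zero]

lemma transfer_nonneg {A M : S → S → Prop} {φ f : (ℕ → S) → ℝ} {ω : ℕ → S}
    (hMA : ∀ a b, M a b → A a b) (hf : ∀ ω ∈ markovShift A, 0 ≤ f ω)
    (hω : ω ∈ markovShift A) : 0 ≤ transfer M φ f ω :=
  tsum_nonneg fun a =>
    mul_nonneg (Real.exp_pos _).le (hf _ (cons_mem_markovShift hω (hMA _ _ a.2)))

section Transfer

variable [TopologicalSpace S] {A M : S → S → Prop} {θ c : ℝ} {k : ℕ}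
  {φ f : (ℕ → S) → ℝ} {ω υ : ℕ → S}

/-- The condition `(C + c) θ ≤ c` on the Lipschitz constant `C` of `φ` is what makes the
contraction `d_θ(a ω, a υ) = θ d_θ(ω, υ)` absorb the distortion of the weight `e^φ`. -/
lemma exp_mul_cons_le_of_mem_cone (hθ : 0 ≤ θ) {C : ℝ}
    (hφ : LipBound (markovShift A) θ (k + 1) φ C) (hCc : (C + c) * θ ≤ c)
    (hf : f ∈ cone (markovShift A) θ k c) (hω : ω ∈ markovShift A) (hυ : υ ∈ markovShift A)
    (hagree : ∀ i < k, ω i = υ i) {a : S} (haω : A a (ω 0)) (haυ : A a (υ 0)) :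
    Real.exp (φ (cons a ω)) * f (cons a ω) ≤
      Real.exp (c * dtheta θ ω υ) * (Real.exp (φ (cons a υ)) * f (cons a υ)) := by
  have hω' := cons_mem_markovShift hω haω
  have hυ' := cons_mem_markovShift hυ haυ
  have hagree' : ∀ i < k + 1, cons a ω i = cons a υ i
    | 0, _ => rfl
    | i + 1, hi => hagree i (by omega)
  set D := dtheta θ ω υ
  have hφD : φ (cons a ω) ≤ φ (cons a υ) + C * (θ * D) := by
    have := hφ.abs_sub_le_mul_dtheta hω' hυ' hagree'
    rw [dtheta_cons_cons] at this
    linarith [(abs_le.mp this).2]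
  have hfD : f (cons a ω) ≤ Real.exp (c * (θ * D)) * f (cons a υ) := by
    rw [← dtheta_cons_cons]
    exact hf.2.2 _ hω' _ hυ' fun i hi => hagree' i (by omega)
  have hexp : (C + c) * θ * D ≤ c * D :=
    mul_le_mul_of_nonneg_right hCc (dtheta_nonneg hθ ω υ)
  have hfω : 0 ≤ f (cons a ω) := hf.2.1 _ hω'
  have hfυ : 0 ≤ f (cons a υ) := hf.2.1 _ hυ'
  calc Real.exp (φ (cons a ω)) * f (cons a ω)
      ≤ Real.exp (φ (cons a υ) + C * (θ * D)) * (Real.exp (c * (θ * D)) * f (cons a υ)) := by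
        gcongr
    _ = Real.exp ((C + c) * θ * D) * (Real.exp (φ (cons a υ)) * f (cons a υ)) := by
        rw [← mul_assoc, ← Real.exp_add, ← mul_assoc (Real.exp _), ← Real.exp_add]
        ring_nf
    _ ≤ Real.exp (c * D) * (Real.exp (φ (cons a υ)) * f (cons a υ)) := by
        gcongr

lemma transfer_le_exp_mul_transfer (hMA : ∀ a b, M a b → A a b) (hθ : 0 ≤ θ) (hk : 1 ≤ k)
    {C : ℝ} (hφ : LipBound (markovShift A) θ (k + 1) φ C) (hCc : (C + c) * θ ≤ c)
    (hf : f ∈ cone (markovShift A) θ k c) (hω : ω ∈ markovShift A) (hυ : υ ∈ markovShift A)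
    (hagree : ∀ i < k, ω i = υ i) :
    transfer M φ f ω ≤ Real.exp (c * dtheta θ ω υ) * transfer M φ f υ := by
  have h0 : ω 0 = υ 0 := hagree 0 hk
  have hAω : ∀ a, M a (υ 0) → A a (ω 0) := fun a ha => h0 ▸ hMA _ _ ha
  unfold transfer
  rw [h0]
  refine tsum_le_mul_tsum_of_le_mul (K' := Real.exp (c * dtheta θ υ ω))
    (fun a => mul_nonneg (Real.exp_pos _).le (hf.2.1 _ (cons_mem_markovShift hω (hAω _ a.2))))
    (fun a => mul_nonneg (Real.exp_pos _).le (hf.2.1 _ (cons_mem_markovShift hυ (hMA _ _ a.2))))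
    (fun a => ?_) (fun a => ?_)
  · exact exp_mul_cons_le_of_mem_cone hθ hφ hCc hf hω hυ hagree (hAω _ a.2) (hMA _ _ a.2)
  · exact exp_mul_cons_le_of_mem_cone hθ hφ hCc hf hυ hω (fun i hi => (hagree i hi).symm)
      (hMA _ _ a.2) (hAω _ a.2)

end Transfer

end TMS

theorem stmt3_general {S : Type*} [TopologicalSpace S]
    (A M : S → S → Prop) (hMA : ∀ a b, M a b → A a b)
    (θ : ℝ) (hθ0 : 0 < θ) (hθ1 : θ < 1) (k : ℕ) (hk : 1 ≤ k)
    (φ : (ℕ → S) → ℝ)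
    (hφlip : ∃ C, TMS.LipBound (TMS.markovShift A) θ (k + 1) φ C)
    (c : ℝ) (hc : θ * TMS.lipSemi (TMS.markovShift A) θ (k + 1) φ / (1 - θ) ≤ c)
    (f : (ℕ → S) → ℝ) (hf : f ∈ TMS.cone (TMS.markovShift A) θ k c)
    (hcont : ContinuousOn (TMS.transfer M φ f) (TMS.markovShift A)) :
    TMS.transfer M φ f ∈ TMS.cone (TMS.markovShift A) θ k c := by
  have hCc : (TMS.lipSemi (TMS.markovShift A) θ (k + 1) φ + c) * θ ≤ c := by
    rw [div_le_iff₀ (by linarith)] at hc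
    linarith
  exact ⟨hcont, fun ω hω => TMS.transfer_nonneg hMA hf.2.1 hω,
    fun ω hω υ hυ hagree => TMS.transfer_le_exp_mul_transfer hMA hθ0.le hk
      (TMS.lipBound_lipSemi hθ0 hφlip) hCc hf hω hυ hagree⟩

/-- if `[φ]_{k+1} < ∞`, `c ≥ θ[φ]_{k+1}/(1-θ)`, `f ∈ Λ^k_c` and `L_M f`
is continuous, then `L_M f ∈ Λ^k_c`. -/
theorem stmt3 {S : Type*} [Countable S] [TopologicalSpace S] [DiscreteTopology S]
    (A M : S → S → Prop) (hMA : ∀ a b, M a b → A a b)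
    (θ : ℝ) (hθ0 : 0 < θ) (hθ1 : θ < 1) (k : ℕ) (hk : 1 ≤ k)
    (φ : (ℕ → S) → ℝ)
    (hφlip : ∃ C, TMS.LipBound (TMS.markovShift A) θ (k + 1) φ C)
    (c : ℝ) (hc : θ * TMS.lipSemi (TMS.markovShift A) θ (k + 1) φ / (1 - θ) ≤ c)
    (f : (ℕ → S) → ℝ) (hf : f ∈ TMS.cone (TMS.markovShift A) θ k c)
    (hcont : ContinuousOn (TMS.transfer M φ f) (TMS.markovShift A)) :
    TMS.transfer M φ f ∈ TMS.cone (TMS.markovShift A) θ k c :=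
  stmt3_general A M hMA θ hθ0 hθ1 k hk φ hφlip c hc f hf hcont
end

section
/- Assume (A.1)-(A.3) together with the perturbation conditions (B.1)-(B.3). Then the perturbed transfer operators L_{A,φ_ε} converge to L_M in operator norm on C_b(X): ‖L_{A,φ_ε} - L_M‖_∞ → 0 as ε → 0. -/
open Filter MeasureTheory Topology
open scoped ENNReal NNReal BigOperators

/-- under (A.1)-(A.3) and (B.1)-(B.3), the perturbed operators
`L_{A,φ_ε}` converge to `L_M` in operator norm on `C_b(X)` as `ε → 0⁺`. -/
theorem stmt8 {S : Type*} [Countable S] [TopologicalSpace S] [DiscreteTopology S]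
    (A M : S → S → Prop) (hMA : ∀ a b, M a b → A a b)
    (hA : TMS.FinitelyIrreducible A)
    (θ : ℝ) (hθ0 : 0 < θ) (hθ1 : θ < 1) (k : ℕ) (hk : 1 ≤ k)
    (φ : (ℕ → S) → ℝ) (hφ : TMS.SummableOn (TMS.markovShift A) φ)
    (hφlip : ∃ C, TMS.LipBound (TMS.markovShift A) θ (k + 1) φ C)
    (hper : TMS.HasPeriodicPoint (TMS.markovShift M))
    (φε : ℝ → (ℕ → S) → ℝ)
    -- (B.1): each `φ(ε,·) ∈ F¹(X,ℝ)` and `sup_ε [φ(ε,·)]_{k+1} < ∞`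
    (hB1a : ∀ ε : ℝ, 0 < ε → ∃ C, TMS.LipBound (TMS.markovShift A) θ 1 (φε ε) C)
    (hB1b : ∃ C, ∀ ε : ℝ, 0 < ε → TMS.LipBound (TMS.markovShift A) θ (k + 1) (φε ε) C)
    -- (B.2): `Σ_s exp (sup_{ε>0} sup_{[s]} φ(ε,·)) < ∞`
    (hB2 : ∃ b : S → ℝ,
      (∀ s : S, ∀ ε : ℝ, 0 < ε → ∀ ω ∈ TMS.cyl1 (TMS.markovShift A) s, φε ε ω ≤ b s) ∧
      Summable (fun s : S => Real.exp (b s)))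
    -- (B.3): `sup_{[a]} |e^{φ(ε,·)} - ψ| → 0` for each `a`, where `ψ = e^φ χ_{{M(ω₀ω₁)=1}}`
    (hB3 : ∀ a : S, Filter.Tendsto
      (fun ε : ℝ => sSup ((fun ω => |Real.exp (φε ε ω) -
          Set.indicator {ω : ℕ → S | M (ω 0) (ω 1)} (fun ω => Real.exp (φ ω)) ω|) ''
        TMS.cyl1 (TMS.markovShift A) a))
      (nhdsWithin 0 (Set.Ioi 0)) (nhds 0)) :
    Filter.Tendsto
      (fun ε : ℝ => TMS.opNorm (TMS.supNorm (TMS.markovShift A)) (TMS.Cb (TMS.markovShift A))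
        (fun f ω => TMS.transfer A (φε ε) f ω - TMS.transfer M φ f ω))
      (nhdsWithin 0 (Set.Ioi 0)) (nhds 0) := by
    classical
  obtain ⟨b, hb, hbsum⟩ := hB2
  set X := TMS.markovShift A with hX
  set ψ : (ℕ → S) → ℝ :=
    Set.indicator {ω : ℕ → S | M (ω 0) (ω 1)} (fun ω => Real.exp (φ ω)) with hψ
  -- X is nonempty
  obtain ⟨ω₀, hω₀, -⟩ := hper
  have hω₀X : ω₀ ∈ X := fun n => hMA _ _ (hω₀ n)
  have hXne : X.Nonempty := ⟨ω₀, hω₀X⟩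
  have hψnn : ∀ υ, 0 ≤ ψ υ := fun υ =>
    Set.indicator_nonneg (fun υ _ => (Real.exp_pos _).le) υ
  have hψle : ∀ υ, ψ υ ≤ Real.exp (φ υ) := fun υ =>
    Set.indicator_le_self' (fun υ _ => (Real.exp_pos _).le) υ
  -- cons stays in X and in the cylinder
  have hcons : ∀ a (ω : ℕ → S), ω ∈ X → A a (ω 0) → TMS.cons a ω ∈ TMS.cyl1 X a := by
    intro a ω hω ha
    refine ⟨fun n => ?_, rfl⟩
    cases n with
    | zero => exact ha
    | succ n => exact hω n
  -- the supremum in (B.3)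
  set g : ℝ → S → ℝ := fun ε a =>
    sSup ((fun ω => |Real.exp (φε ε ω) - ψ ω|) '' TMS.cyl1 X a) with hg
  -- dominating function
  set s : S → ℝ := fun a => sSup (φ '' TMS.cyl1 X a) with hs
  set D : S → ℝ := fun a => Real.exp (b a) +
    Set.indicator {a : S | (TMS.cyl1 X a).Nonempty} (fun a => Real.exp (s a)) a with hD
  have hDnn : ∀ a, 0 ≤ D a := fun a =>
    add_nonneg (Real.exp_pos _).le
      (Set.indicator_nonneg (fun a _ => (Real.exp_pos _).le) a)
  have hDsum : Summable D := by
    refine hbsum.add ?_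
    rw [← summable_subtype_iff_indicator]
    exact hφ.2
  -- pointwise bound on the B.3 integrand
  have hub : ∀ ε : ℝ, 0 < ε → ∀ a, ∀ υ ∈ TMS.cyl1 X a,
      |Real.exp (φε ε υ) - ψ υ| ≤ D a := by
    intro ε hε a υ hυ
    have h1 : Real.exp (φε ε υ) ≤ Real.exp (b a) := Real.exp_le_exp.2 (hb a ε hε υ hυ)
    have h2 : ψ υ ≤ Real.exp (s a) :=
      (hψle υ).trans (Real.exp_le_exp.2 (le_csSup (hφ.1 a) ⟨υ, hυ, rfl⟩))
    have h3 : Set.indicator {a : S | (TMS.cyl1 X a).Nonempty} (fun a => Real.exp (s a)) a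
        = Real.exp (s a) := Set.indicator_of_mem (show a ∈ {a : S | (TMS.cyl1 X a).Nonempty} from ⟨υ, hυ⟩) _
    calc |Real.exp (φε ε υ) - ψ υ| ≤ |Real.exp (φε ε υ)| + |ψ υ| := abs_sub _ _
      _ = Real.exp (φε ε υ) + ψ υ := by
          rw [abs_of_nonneg (Real.exp_pos _).le, abs_of_nonneg (hψnn υ)]
      _ ≤ D a := by rw [hD]; dsimp only; rw [h3]; exact add_le_add h1 h2
  have hBdd : ∀ ε : ℝ, 0 < ε → ∀ a,
      BddAbove ((fun ω => |Real.exp (φε ε ω) - ψ ω|) '' TMS.cyl1 X a) := by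
    intro ε hε a
    exact ⟨D a, fun x ⟨υ, hυ, hx⟩ => hx ▸ hub ε hε a υ hυ⟩
  have hgD : ∀ ε : ℝ, 0 < ε → ∀ a, g ε a ≤ D a := by
    intro ε hε a
    rcases Set.eq_empty_or_nonempty (TMS.cyl1 X a) with h | h
    · simp only [hg, h, Set.image_empty, Real.sSup_empty]; exact hDnn a
    · exact csSup_le (h.image _) (fun x ⟨υ, hυ, hx⟩ => hx ▸ hub ε hε a υ hυ)
  have hgnn : ∀ ε : ℝ, 0 < ε → ∀ a, 0 ≤ g ε a := by
    intro ε hε a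
    rcases Set.eq_empty_or_nonempty (TMS.cyl1 X a) with h | h
    · simp [hg, h]
    · obtain ⟨υ, hυ⟩ := h
      exact (abs_nonneg _).trans (le_csSup (hBdd ε hε a) ⟨υ, hυ, rfl⟩)
  have hgsum : ∀ ε : ℝ, 0 < ε → Summable (g ε) := fun ε hε =>
    hDsum.of_nonneg_of_le (hgnn ε hε) (hgD ε hε)
  -- the dominating quantity K ε
  set K : ℝ → ℝ := fun ε => ∑' a, g ε a with hK
  have hKnn : ∀ ε : ℝ, 0 < ε → 0 ≤ K ε := fun ε hε =>
    tsum_nonneg (hgnn ε hε)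
  -- K tends to 0
  have hKtendsto : Filter.Tendsto K (nhdsWithin 0 (Set.Ioi 0)) (nhds 0) := by
    have := tendsto_tsum_of_dominated_convergence (𝓕 := nhdsWithin (0:ℝ) (Set.Ioi 0))
      (f := fun ε a => g ε a) (g := fun _ : S => (0:ℝ)) (bound := D) hDsum
      (fun a => hB3 a) ?_
    · simpa [hK] using this
    · filter_upwards [self_mem_nhdsWithin] with ε hε a
      rw [Real.norm_eq_abs, abs_of_nonneg (hgnn ε hε a)]
      exact hgD ε hε a
  -- the main estimate
  have hmain : ∀ ε : ℝ, 0 < ε → ∀ f ∈ TMS.Cb X, TMS.supNorm X f ≤ 1 →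
      ∀ ω ∈ X, |TMS.transfer A (φε ε) f ω - TMS.transfer M φ f ω| ≤ K ε := by
    intro ε hε f hf hfN ω hω
    have hfb : ∀ υ ∈ X, |f υ| ≤ 1 := fun υ hυ =>
      (le_csSup hf.2 ⟨υ, hυ, rfl⟩).trans hfN
    set u : S → ℝ := Set.indicator {a : S | A a (ω 0)}
      (fun a => Real.exp (φε ε (TMS.cons a ω)) * f (TMS.cons a ω)) with hu
    set v : S → ℝ := Set.indicator {a : S | M a (ω 0)}
      (fun a => Real.exp (φ (TMS.cons a ω)) * f (TMS.cons a ω)) with hv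
    have hub2 : ∀ a, |u a| ≤ Real.exp (b a) := by
      intro a
      by_cases ha : A a (ω 0)
      · rw [hu, Set.indicator_of_mem (show a ∈ {a : S | A a (ω 0)} from ha), abs_mul,
          abs_of_nonneg (Real.exp_pos _).le]
        calc Real.exp (φε ε (TMS.cons a ω)) * |f (TMS.cons a ω)|
            ≤ Real.exp (b a) * 1 := by
              refine mul_le_mul ?_ (hfb _ (hcons a ω hω ha).1) (abs_nonneg _)
                (Real.exp_pos _).le
              exact Real.exp_le_exp.2 (hb a ε hε _ (hcons a ω hω ha))
          _ = Real.exp (b a) := mul_one _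
      · rw [hu, Set.indicator_of_notMem (show a ∉ {a : S | A a (ω 0)} from ha)]; simpa using (Real.exp_pos (b a)).le
    have hvb : ∀ a, |v a| ≤ D a := by
      intro a
      by_cases ha : M a (ω 0)
      · have haA : A a (ω 0) := hMA _ _ ha
        have hmem := hcons a ω hω haA
        rw [hv, Set.indicator_of_mem (show a ∈ {a : S | M a (ω 0)} from ha), abs_mul,
          abs_of_nonneg (Real.exp_pos _).le]
        have h1 : Real.exp (φ (TMS.cons a ω)) ≤ Real.exp (s a) :=
          Real.exp_le_exp.2 (le_csSup (hφ.1 a) ⟨_, hmem, rfl⟩)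
        calc Real.exp (φ (TMS.cons a ω)) * |f (TMS.cons a ω)|
            ≤ Real.exp (s a) * 1 :=
              mul_le_mul h1 (hfb _ hmem.1) (abs_nonneg _) (Real.exp_pos _).le
          _ = Real.exp (s a) := mul_one _
          _ ≤ D a := by
              rw [hD]; dsimp only
              rw [Set.indicator_of_mem (show a ∈ {a : S | (TMS.cyl1 X a).Nonempty} from ⟨_, hmem⟩)]
              exact le_add_of_nonneg_left (Real.exp_pos _).le
      · rw [hv, Set.indicator_of_notMem (show a ∉ {a : S | M a (ω 0)} from ha)]; simpa using hDnn a
    have husum : Summable u :=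
      Summable.of_abs (hbsum.of_nonneg_of_le (fun a => abs_nonneg _) hub2)
    have hvsum : Summable v :=
      Summable.of_abs (hDsum.of_nonneg_of_le (fun a => abs_nonneg _) hvb)
    have hT1 : TMS.transfer A (φε ε) f ω = ∑' a, u a := by
      rw [TMS.transfer, hu]
      exact tsum_subtype {a : S | A a (ω 0)}
        (fun a => Real.exp (φε ε (TMS.cons a ω)) * f (TMS.cons a ω))
    have hT2 : TMS.transfer M φ f ω = ∑' a, v a := by
      rw [TMS.transfer, hv]
      exact tsum_subtype {a : S | M a (ω 0)}
        (fun a => Real.exp (φ (TMS.cons a ω)) * f (TMS.cons a ω))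
    have hptwise : ∀ a, |u a - v a| ≤ g ε a := by
      intro a
      by_cases ha : A a (ω 0)
      · have hmem := hcons a ω hω ha
        have huv : u a - v a =
            (Real.exp (φε ε (TMS.cons a ω)) - ψ (TMS.cons a ω)) * f (TMS.cons a ω) := by
          rw [hu, hv, Set.indicator_of_mem (show a ∈ {a : S | A a (ω 0)} from ha), sub_mul]
          congr 1
          by_cases hm : M a (ω 0)
          · rw [Set.indicator_of_mem (show a ∈ {a : S | M a (ω 0)} from hm), hψ,
              Set.indicator_of_mem (show TMS.cons a ω ∈ {ω : ℕ → S | M (ω 0) (ω 1)} from hm)]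
          · rw [Set.indicator_of_notMem (show a ∉ {a : S | M a (ω 0)} from hm), hψ,
              Set.indicator_of_notMem (show TMS.cons a ω ∉ {ω : ℕ → S | M (ω 0) (ω 1)} from hm)]
            exact (zero_mul _).symm
        rw [huv, abs_mul]
        calc |Real.exp (φε ε (TMS.cons a ω)) - ψ (TMS.cons a ω)| * |f (TMS.cons a ω)|
            ≤ g ε a * 1 := by
              refine mul_le_mul ?_ (hfb _ hmem.1) (abs_nonneg _) (hgnn ε hε a)
              exact le_csSup (hBdd ε hε a) ⟨_, hmem, rfl⟩
          _ = g ε a := mul_one _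
      · have hm : ¬ M a (ω 0) := fun h => ha (hMA _ _ h)
        rw [hu, hv, Set.indicator_of_notMem (show a ∉ {a : S | A a (ω 0)} from ha),
          Set.indicator_of_notMem (show a ∉ {a : S | M a (ω 0)} from hm)]
        simpa using hgnn ε hε a
    calc |TMS.transfer A (φε ε) f ω - TMS.transfer M φ f ω|
        = |∑' a, (u a - v a)| := by rw [hT1, hT2, Summable.tsum_sub husum hvsum]
      _ ≤ ∑' a, |u a - v a| := by
          simpa [Real.norm_eq_abs] using
            norm_tsum_le_tsum_norm (f := fun a => u a - v a)
              (by simpa [Real.norm_eq_abs] using (husum.sub hvsum).abs)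
      _ ≤ ∑' a, g ε a :=
          Summable.tsum_le_tsum hptwise (husum.sub hvsum).abs (hgsum ε hε)
      _ = K ε := rfl
  -- 0 is in the opNorm set (witnessed by f = 0)
  have hzero_mem : ∀ ε : ℝ, (0:ℝ) ∈ {r | ∃ f ∈ TMS.Cb X, TMS.supNorm X f ≤ 1 ∧
      r = TMS.supNorm X ((fun f ω => TMS.transfer A (φε ε) f ω - TMS.transfer M φ f ω) f)} := by
    intro ε
    have hzsup : TMS.supNorm X (fun _ : ℕ → S => (0:ℝ)) = 0 := by
      rw [TMS.supNorm]
      have : (fun ω : ℕ → S => |(0:ℝ)|) '' X = {0} := by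
        rw [show (fun ω : ℕ → S => |(0:ℝ)|) = fun _ => (0:ℝ) by simp]
        exact Set.Nonempty.image_const hXne 0
      rw [this, csSup_singleton]
    refine ⟨0, ⟨continuousOn_const, ?_⟩, ?_, ?_⟩
    · refine ⟨0, fun x ⟨υ, hυ, hx⟩ => ?_⟩
      simp only [← hx]; simp [Pi.zero_apply]
    · show TMS.supNorm X (0 : (ℕ → S) → ℝ) ≤ 1
      have : (0 : (ℕ → S) → ℝ) = fun _ => (0:ℝ) := rfl
      rw [this, hzsup]; norm_num
    · have hT0 : ∀ (N : S → S → Prop) (χ : (ℕ → S) → ℝ) (ω : ℕ → S),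
          TMS.transfer N χ (0 : (ℕ → S) → ℝ) ω = 0 := by
        intro N χ ω
        rw [TMS.transfer]
        simp
      have : (fun ω => TMS.transfer A (φε ε) (0 : (ℕ → S) → ℝ) ω -
          TMS.transfer M φ (0 : (ℕ → S) → ℝ) ω) = fun _ => (0:ℝ) := by
        funext ω; rw [hT0, hT0, sub_zero]
      beta_reduce
      rw [this, hzsup]
  -- squeeze
  refine squeeze_zero' ?_ ?_ hKtendsto
  · filter_upwards [self_mem_nhdsWithin] with ε hε
    have hε : (0:ℝ) < ε := hε
    refine le_csSup ⟨K ε, ?_⟩ (hzero_mem ε)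
    rintro r ⟨f, hf, hfN, rfl⟩
    refine csSup_le (hXne.image _) ?_
    rintro x ⟨ω, hω, rfl⟩
    exact hmain ε hε f hf hfN ω hω
  · filter_upwards [self_mem_nhdsWithin] with ε hε
    have hε : (0:ℝ) < ε := hε
    refine csSup_le ⟨0, hzero_mem ε⟩ ?_
    rintro r ⟨f, hf, hfN, rfl⟩
    refine csSup_le (hXne.image _) ?_
    rintro x ⟨ω, hω, rfl⟩
    exact hmain ε hε f hf hfN ω hω
end

section
/- (Extension of potentials) Let Y = X_M be a subsystem of X = X_A with [a] ∩ Y ≠ ∅ for every state a, and let φ: Y → ℝ. Then there is an extension φ̂: X → ℝ such that (i) φ̂ = φ on Y; (ii) if φ is summable then φ̂ is summable; (iii) ‖φ̂‖_∞ = ‖φ‖_∞; and (iv) [φ̂]_n = [φ]_n for all n ≥ 1. -/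
open Filter MeasureTheory Topology
open scoped ENNReal NNReal BigOperators

namespace Stmt18Aux

variable {S : Type*}

/-- the word `ω_0 ⋯ ω_{n-1}` is `M`-admissible -/
def good (M : S → S → Prop) (ω : ℕ → S) (n : ℕ) : Prop :=
  ∀ i, i + 1 < n → M (ω i) (ω (i + 1))

theorem good_congr {M : S → S → Prop} {ω υ : ℕ → S} {n : ℕ}
    (h : ∀ i, i < n → ω i = υ i) (hg : good M ω n) : good M υ n := by
  intro i hi
  rw [← h i (by omega), ← h (i + 1) hi]
  exact hg i hi

theorem good_one {M : S → S → Prop} {ω : ℕ → S} : good M ω 1 := by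
  intro i hi; omega

theorem fullyGood_iff {M : S → S → Prop} {ω : ℕ → S} :
    (∀ n, good M ω n) ↔ ω ∈ TMS.markovShift M := by
  constructor
  · intro h i
    exact h (i + 2) i (by omega)
  · intro h n i _
    exact h i

/-- length of the longest `M`-admissible initial word (junk if `ω ∈ X_M`) -/
noncomputable def ell (M : S → S → Prop) (ω : ℕ → S) : ℕ :=
  sInf {n | ¬ good M ω (n + 1)}

theorem ell_spec {M : S → S → Prop} {ω : ℕ → S} (h : ¬ ∀ n, good M ω n) :
    ¬ good M ω (ell M ω + 1) ∧ good M ω (ell M ω) ∧ 1 ≤ ell M ω := by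
  obtain ⟨n, hn⟩ := not_forall.mp h
  have hn1 : n ≠ 0 := by rintro rfl; exact hn (fun i hi => by omega)
  have hne : (n - 1) ∈ {k | ¬ good M ω (k + 1)} := by
    simp only [Set.mem_setOf_eq]
    have heq : n - 1 + 1 = n := by omega
    rwa [heq]
  have hmem : ¬ good M ω (ell M ω + 1) := Nat.sInf_mem ⟨_, hne⟩
  have h1 : 1 ≤ ell M ω := by
    by_contra hc
    have h0 : ell M ω = 0 := by omega
    rw [h0] at hmem
    exact hmem good_one
  refine ⟨hmem, ?_, h1⟩
  have hlt : ell M ω - 1 < sInf {k | ¬ good M ω (k + 1)} := by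
    have : sInf {k | ¬ good M ω (k + 1)} = ell M ω := rfl
    omega
  have := Nat.notMem_of_lt_sInf hlt
  simp only [Set.mem_setOf_eq, not_not] at this
  have heq : ell M ω - 1 + 1 = ell M ω := by omega
  rwa [heq] at this

open Classical in
/-- retraction of the full shift onto `X_M` -/
noncomputable def ret (M : S → S → Prop) (υf : S → ℕ → S) (ω : ℕ → S) : ℕ → S :=
  if ∀ n, good M ω n then ω
  else fun i => if i < ell M ω then ω i else υf (ω (ell M ω - 1)) (i - (ell M ω - 1))

theorem ret_eq {M : S → S → Prop} {υf : S → ℕ → S} {ω : ℕ → S}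
    (h : ω ∈ TMS.markovShift M) : ret M υf ω = ω := by
  rw [ret, if_pos (fullyGood_iff.mpr h)]

theorem ret_apply {M : S → S → Prop} {υf : S → ℕ → S} {ω : ℕ → S}
    (h : ¬ ∀ n, good M ω n) (i : ℕ) :
    ret M υf ω i =
      if i < ell M ω then ω i else υf (ω (ell M ω - 1)) (i - (ell M ω - 1)) := by
  simp only [ret, if_neg h]

theorem ret_eq_of_good {M : S → S → Prop} {υf : S → ℕ → S} {ω : ℕ → S}
    (h : ∀ n, good M ω n) : ret M υf ω = ω := by
  rw [ret, if_pos h]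

theorem ret_mem {M : S → S → Prop} {υf : S → ℕ → S}
    (hυ : ∀ a, υf a ∈ TMS.markovShift M ∧ υf a 0 = a) (ω : ℕ → S) :
    ret M υf ω ∈ TMS.markovShift M := by
  by_cases h : ∀ n, good M ω n
  · rw [ret, if_pos h]; exact fullyGood_iff.mp h
  · obtain ⟨-, hg, h1⟩ := ell_spec h
    intro i
    rw [ret_apply h, ret_apply h]
    rcases lt_or_ge (i + 1) (ell M ω) with hi | hi
    · rw [if_pos (show i < ell M ω by omega), if_pos hi]
      exact hg i hi
    · rw [if_neg (show ¬ (i + 1 < ell M ω) by omega)]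
      rcases lt_or_ge i (ell M ω) with hi2 | hi2
      · have hiℓ : i = ell M ω - 1 := by omega
        rw [if_pos hi2, hiℓ]
        have h0 : (υf (ω (ell M ω - 1))) 0 = ω (ell M ω - 1) := (hυ _).2
        have hM := (hυ (ω (ell M ω - 1))).1 0
        rw [h0] at hM
        have harith : ell M ω - 1 + 1 - (ell M ω - 1) = 1 := by omega
        rwa [harith]
      · rw [if_neg (show ¬ (i < ell M ω) by omega)]
        have harith : i + 1 - (ell M ω - 1) = (i - (ell M ω - 1)) + 1 := by omega
        rw [harith]
        exact (hυ (ω (ell M ω - 1))).1 (i - (ell M ω - 1))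

theorem ret_zero {M : S → S → Prop} {υf : S → ℕ → S} (ω : ℕ → S) :
    ret M υf ω 0 = ω 0 := by
  by_cases h : ∀ n, good M ω n
  · rw [ret, if_pos h]
  · obtain ⟨-, -, h1⟩ := ell_spec h
    rw [ret_apply h, if_pos (by omega)]

theorem ret_agree {M : S → S → Prop} {υf : S → ℕ → S} {ω υ : ℕ → S} {m : ℕ}
    (hm : 1 ≤ m) (h : ∀ i, i < m → ω i = υ i) :
    ∀ i, i < m → ret M υf ω i = ret M υf υ i := by
  have key : ∀ (α β : ℕ → S), (∀ i, i < m → α i = β i) → (¬ ∀ n, good M α n) →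
      ell M α < m → ¬ good M β (ell M α + 1) := by
    intro α β hab hα hℓ
    have hbad := (ell_spec hα).1
    intro hg
    exact hbad (good_congr (fun i hi => (hab i (by omega)).symm) hg)
  by_cases hω : ∀ n, good M ω n
  · by_cases hυ2 : ∀ n, good M υ n
    · rw [ret_eq_of_good hω, ret_eq_of_good hυ2]; exact h
    · have hℓ : m ≤ ell M υ := by
        by_contra hc
        exact key υ ω (fun i hi => (h i hi).symm) hυ2 (by omega) (hω _)
      intro i hi
      rw [ret_eq_of_good hω, ret_apply hυ2, if_pos (show i < ell M υ by omega)]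
      exact h i hi
  · by_cases hυ2 : ∀ n, good M υ n
    · have hℓ : m ≤ ell M ω := by
        by_contra hc
        exact key ω υ h hω (by omega) (hυ2 _)
      intro i hi
      rw [ret_eq_of_good hυ2, ret_apply hω, if_pos (show i < ell M ω by omega)]
      exact h i hi
    · rcases lt_or_ge (ell M ω) m with hℓω | hℓω
      · have hle1 : ell M υ ≤ ell M ω := by
          by_contra hc
          exact Nat.notMem_of_lt_sInf (show ell M ω < sInf {k | ¬ good M υ (k + 1)}
            from by have : sInf {k | ¬ good M υ (k + 1)} = ell M υ := rfl; omega)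
            (key ω υ h hω hℓω)
        have hle2 : ell M ω ≤ ell M υ := by
          by_contra hc
          exact Nat.notMem_of_lt_sInf (show ell M υ < sInf {k | ¬ good M ω (k + 1)}
            from by have : sInf {k | ¬ good M ω (k + 1)} = ell M ω := rfl; omega)
            (key υ ω (fun i hi => (h i hi).symm) hυ2 (by omega))
        have heq : ell M υ = ell M ω := le_antisymm hle1 hle2
        intro i hi
        rw [ret_apply hω, ret_apply hυ2, heq]
        rcases lt_or_ge i (ell M ω) with hi2 | hi2
        · rw [if_pos hi2, if_pos hi2]
          exact h i (by omega)
        · rw [if_neg (show ¬ (i < ell M ω) by omega), if_neg (show ¬ (i < ell M ω) by omega),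
            h (ell M ω - 1) (by omega)]
      · have hℓυ : m ≤ ell M υ := by
          by_contra hc
          have hk := key υ ω (fun i hi => (h i hi).symm) hυ2 (by omega)
          have h2 : ell M ω ≤ ell M υ := by
            by_contra hc2
            exact Nat.notMem_of_lt_sInf (show ell M υ < sInf {k | ¬ good M ω (k + 1)}
              from by have : sInf {k | ¬ good M ω (k + 1)} = ell M ω := rfl; omega) hk
          omega
        intro i hi
        rw [ret_apply hω, ret_apply hυ2, if_pos (show i < ell M ω by omega),
          if_pos (show i < ell M υ by omega)]
        exact h i hi

end Stmt18Aux

/-- extension of potentials: if `Y = X_M ⊆ X = X_A` meets every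
1-cylinder, then any `φ : Y → ℝ` extends to `φ̂ : X → ℝ` preserving summability, the
sup norm, and all seminorms `[·]_n`. -/
theorem stmt18 {S : Type*} [Countable S]
    (A M : S → S → Prop) (hMA : ∀ a b, M a b → A a b)
    (θ : ℝ) (hθ0 : 0 < θ) (hθ1 : θ < 1)
    (hY : ∀ a : S, ∃ ω ∈ TMS.markovShift M, ω 0 = a)
    (φ : (ℕ → S) → ℝ) :
    ∃ φhat : (ℕ → S) → ℝ,
      (∀ ω ∈ TMS.markovShift M, φhat ω = φ ω) ∧
      (TMS.SummableOn (TMS.markovShift M) φ →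
        TMS.SummableOn (TMS.markovShift A) φhat) ∧
      TMS.supNorm (TMS.markovShift A) φhat = TMS.supNorm (TMS.markovShift M) φ ∧
      (∀ n : ℕ, 1 ≤ n →
        TMS.lipSemi (TMS.markovShift A) θ n φhat =
          TMS.lipSemi (TMS.markovShift M) θ n φ) := by
  classical
  have hYX : TMS.markovShift M ⊆ TMS.markovShift A := fun ω hω n => hMA _ _ (hω n)
  choose υf hυf1 hυf2 using hY
  have hυ : ∀ a, υf a ∈ TMS.markovShift M ∧ υf a 0 = a := fun a => ⟨hυf1 a, hυf2 a⟩
  refine ⟨fun ω => φ (Stmt18Aux.ret M υf ω), ?_, ?_, ?_, ?_⟩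
  · intro ω hω
    show φ (Stmt18Aux.ret M υf ω) = φ ω
    rw [Stmt18Aux.ret_eq hω]
  · -- summability
    rintro ⟨hb, hs⟩
    have himg : ∀ s : S, (fun ω => φ (Stmt18Aux.ret M υf ω)) '' TMS.cyl1 (TMS.markovShift A) s
        = φ '' TMS.cyl1 (TMS.markovShift M) s := by
      intro s
      ext x
      constructor
      · rintro ⟨ω, ⟨-, hω0⟩, rfl⟩
        exact ⟨Stmt18Aux.ret M υf ω, ⟨Stmt18Aux.ret_mem hυ ω,
          by rw [Stmt18Aux.ret_zero, hω0]⟩, rfl⟩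
      · rintro ⟨ω, ⟨hωY, hω0⟩, rfl⟩
        refine ⟨ω, ⟨hYX hωY, hω0⟩, ?_⟩
        show φ (Stmt18Aux.ret M υf ω) = φ ω
        rw [Stmt18Aux.ret_eq hωY]
    constructor
    · intro s; rw [himg s]; exact hb s
    · have hNeY : ∀ s : S, (TMS.cyl1 (TMS.markovShift M) s).Nonempty :=
        fun s => ⟨υf s, hυf1 s, hυf2 s⟩
      have hNeX : ∀ s : S, (TMS.cyl1 (TMS.markovShift A) s).Nonempty :=
        fun s => ⟨υf s, hYX (hυf1 s), hυf2 s⟩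
      let e : {s : S // (TMS.cyl1 (TMS.markovShift A) s).Nonempty} ≃
          {s : S // (TMS.cyl1 (TMS.markovShift M) s).Nonempty} :=
        ⟨fun s => ⟨s.1, hNeY s.1⟩, fun s => ⟨s.1, hNeX s.1⟩,
          fun s => rfl, fun s => rfl⟩
      have hfe : (fun s : {s : S // (TMS.cyl1 (TMS.markovShift A) s).Nonempty} =>
          Real.exp (sSup ((fun ω => φ (Stmt18Aux.ret M υf ω)) ''
            TMS.cyl1 (TMS.markovShift A) s.1))) =
          (fun s : {s : S // (TMS.cyl1 (TMS.markovShift M) s).Nonempty} =>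
            Real.exp (sSup (φ '' TMS.cyl1 (TMS.markovShift M) s.1))) ∘ e := by
        funext s
        simp only [Function.comp_apply, himg s.1]
        rfl
      rw [hfe]
      exact hs.comp_injective e.injective
  · -- sup norm
    unfold TMS.supNorm
    congr 1
    ext x
    constructor
    · rintro ⟨ω, hωX, rfl⟩
      exact ⟨Stmt18Aux.ret M υf ω, Stmt18Aux.ret_mem hυ ω, rfl⟩
    · rintro ⟨ω, hωY, rfl⟩
      refine ⟨ω, hYX hωY, ?_⟩
      show |φ (Stmt18Aux.ret M υf ω)| = |φ ω|
      rw [Stmt18Aux.ret_eq hωY]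
  · -- Lipschitz seminorms
    intro n hn
    unfold TMS.lipSemi
    congr 1
    ext C
    simp only [Set.mem_setOf_eq]
    constructor
    · rintro ⟨hC0, hC⟩
      refine ⟨hC0, fun m hm ω hω υ hυ' hag => ?_⟩
      have h2 := hC m hm ω (hYX hω) υ (hYX hυ') hag
      simp only at h2
      rwa [Stmt18Aux.ret_eq hω, Stmt18Aux.ret_eq hυ'] at h2
    · rintro ⟨hC0, hC⟩
      refine ⟨hC0, fun m hm ω hω υ hυ' hag => ?_⟩
      exact hC m hm (Stmt18Aux.ret M υf ω) (Stmt18Aux.ret_mem hυ ω)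
        (Stmt18Aux.ret M υf υ) (Stmt18Aux.ret_mem hυ υ)
        (Stmt18Aux.ret_agree (le_trans hn hm) hag)
end

section
/- (Perturbation identity for eigenvectors) Let L be a linear operator on a vector space B over 𝕂 with a triplet (λ, h, ν) ∈ 𝕂 × B × B* such that λ ≠ 0, Lh = λh, L*ν = λν, ν(h) = 1, and such that E := L − λ(h ⊗ ν) has (λI − E)⁻¹ well-defined as a linear operator on B. Let L(ε,·) be linear operators on B with L(ε,·)* ν(ε,·) = λ(ε) ν(ε,·) and ν(ε, h) ≠ 0. Then κ(ε,·) := ν(ε,·)/ν(ε,h) satisfies, for every f ∈ B: κ(ε, f) = ν(f) + κ(ε, (L(ε,·) − L)(h ⊗ κ(ε,·) − I)(E − λI)⁻¹ f). -/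
/-- perturbation identity for eigenvectors: given a linear operator
`L` on a vector space `B` over a field `𝕂` with eigendata `(λ, h, ν)`, `λ ≠ 0`,
`Lh = λh`, `L*ν = λν`, `ν(h) = 1`, such that `E - λI` (with `E = L - λ(h ⊗ ν)`) has
a two-sided linear inverse `R`, and perturbed operators `L(ε,·)` with
`L(ε,·)* ν(ε,·) = λ(ε) ν(ε,·)` and `ν(ε,h) ≠ 0`, the functional
`κ(ε,·) = ν(ε,·)/ν(ε,h)` satisfies
`κ(ε,f) = ν(f) + κ(ε, (L(ε,·) - L)(h ⊗ κ(ε,·) - I)(E - λI)⁻¹ f)`. -/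
theorem stmt19 {K : Type*} [Field K] {B : Type*} [AddCommGroup B] [Module K B]
    (L : B →ₗ[K] B) (lam : K) (h : B) (ν : B →ₗ[K] K)
    (hlam : lam ≠ 0) (hLh : L h = lam • h)
    (hLν : ∀ f : B, ν (L f) = lam * ν f) (hνh : ν h = 1)
    (R : B →ₗ[K] B)
    -- `R` is a two-sided inverse of `E - λI`, where `E f = L f - λ (ν f) h`
    (hR1 : ∀ f : B, R ((L f - lam • (ν f • h)) - lam • f) = f)
    (hR2 : ∀ f : B, (L (R f) - lam • (ν (R f) • h)) - lam • R f = f)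
    (Leps : B →ₗ[K] B) (νeps : B →ₗ[K] K) (lameps : K)
    (heig : ∀ f : B, νeps (Leps f) = lameps * νeps f) (hνeh : νeps h ≠ 0) :
    ∀ f : B,
      νeps f / νeps h =
        ν f + νeps ((Leps - L) ((νeps (R f) / νeps h) • h - R f)) / νeps h := by
  intro f
  set g := R f with hg
  have key : L g - lam • (ν g • h) - lam • g = f := hR2 f
  have hνf : ν f = -(lam * ν g) := by
    rw [← key]; simp [hLν, hνh, smul_eq_mul]
  have hνeLg : νeps (L g) = νeps f + lam * ν g * νeps h + lam * νeps g := by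
    rw [← key]; simp [map_sub, map_smul, smul_eq_mul]; ring
  have hνeLh : νeps (L h) = lam * νeps h := by
    rw [hLh, map_smul, smul_eq_mul]
  simp only [LinearMap.sub_apply, map_sub, map_smul, smul_eq_mul, heig,
    hνeLg, hνeLh, hνf]
  field_simp
  ring
end
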